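/- arXiv:math/0505543 — 5 statements merged into one kernel-verified Lean document; each statement's English description precedes it below -/
import Mathlib

section
/- Let p be a prime, H a cyclic group of order p generated by σ, and M an 𝔽_p[H]-module. Then M is a free 𝔽_p[H]-module if and only if M^H = (σ−1)^{p−1}·M, where M^H denotes the submodule of H-fixed elements. -/
/-- The group algebra `𝔽_p[H]` for `H` the cyclic group of order `p`, generated by `σ`. -/
abbrev Sp (p : ℕ) : Type := MonoidAlgebra (ZMod p) (Multiplicative (ZMod p))

/-- The generator `σ` of the cyclic group `H`, as an element of the group algebra. -/
noncomputable def sigma (p : ℕ) : Sp p :=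
  MonoidAlgebra.of (ZMod p) (Multiplicative (ZMod p)) (Multiplicative.ofAdd 1)

/-!
Write `t = σ - 1`. In characteristic `p` we have `t ^ p = σ ^ p - 1 = 0`, and since
`Φ_p = (X - 1) ^ (p - 1)` over `𝔽_p`, `t ^ (p - 1)` is the norm element `∑ g`. The `σ`-fixed
elements of `𝔽_p[H]` are the multiples of the norm, so the annihilator of `t` is
`𝔽_p · t ^ (p - 1)`; nothing else is needed about `𝔽_p[H] ≅ 𝔽_p[t]/(t ^ p)`.

For a free module this gives `ker t = t ^ (p - 1) M` coordinatewise. Conversely, lift an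
`𝔽_p`-basis of `t ^ (p - 1) M` to `M`. The induced map from a free module is surjective by
induction on the order of `t`-nilpotency, and injective because it is injective on the socle
`ker t` of the free module, which meets every nonzero submodule.
-/

section NilpotentAction

variable {A M N : Type*} [Ring A] [AddCommGroup M] [Module A M] [AddCommGroup N] [Module A N]
  {t : A} {n : ℕ}

theorem Submodule.eq_top_of_ker_smul_le_pow_smul (P : Submodule A M)
    (hM : ∀ m : M, t ^ (n + 1) • m = 0) (hP : ∀ m : M, t • m = 0 → ∃ y ∈ P, t ^ n • y = m) :
    P = ⊤ := by
  suffices ∀ k ≤ n + 1, ∀ m : M, t ^ k • m = 0 → m ∈ P from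
    eq_top_iff.mpr fun m _ => this (n + 1) le_rfl m (hM m)
  intro k
  induction k with
  | zero => intro _ m hm; rw [pow_zero, one_smul] at hm; simp [hm]
  | succ k ih =>
    intro hk m hm
    obtain ⟨y, hyP, hy⟩ := hP (t ^ k • m) (by rw [smul_smul, ← pow_succ', hm])
    have hyk : t ^ k • t ^ (n - k) • y = t ^ k • m := by
      rw [smul_smul, ← pow_add, Nat.add_sub_cancel' (by omega), hy]
    have hdiff : m - t ^ (n - k) • y ∈ P :=
      ih (by omega) _ (by rw [smul_sub, hyk, sub_self])
    simpa using P.add_mem hdiff (P.smul_mem (t ^ (n - k)) hyP)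

theorem LinearMap.injective_of_eq_zero_of_smul_eq_zero (f : N →ₗ[A] M)
    (hN : ∀ x : N, t ^ n • x = 0) (hf : ∀ x : N, t • x = 0 → f x = 0 → x = 0) :
    Function.Injective f := by
  suffices ∀ k, ∀ x : N, t ^ k • x = 0 → f x = 0 → x = 0 from
    (injective_iff_map_eq_zero f).mpr fun x => this n x (hN x)
  intro k
  induction k with
  | zero => intro x hx _; simpa using hx
  | succ k ih =>
    intro x hx hfx
    have htx : t • x = 0 :=
      ih _ (by rw [smul_smul, ← pow_succ, hx]) (by rw [map_smul, hfx, smul_zero])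
    exact hf x htx hfx

end NilpotentAction

section TruncatedPolynomialAction

variable {A M : Type*} [Ring A] [AddCommGroup M] [Module A M] {t : A} {n : ℕ}

theorem Module.Free.exists_pow_smul_eq_of_smul_eq_zero [Module.Free A M]
    (hann : ∀ a : A, t * a = 0 → ∃ b, t ^ n * b = a) {m : M} (hm : t • m = 0) :
    ∃ m', t ^ n • m' = m := by
  let e := Module.Free.chooseBasis A M
  have hcoord : ∀ i, t * e.repr m i = 0 := fun i => by
    simpa using congrArg (· i) (congrArg e.repr hm)
  choose! root hroot using hann
  refine ⟨∑ i ∈ (e.repr m).support, root (e.repr m i) • e i, ?_⟩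
  conv_rhs => rw [← e.linearCombination_repr m, Finsupp.linearCombination_apply, Finsupp.sum]
  simp only [Finset.smul_sum, smul_smul, hroot _ (hcoord _)]

theorem Module.free_of_forall_smul_eq_zero_exists_pow_smul {k : Type*} [Field k] [Algebra k A]
    [Module k M] [IsScalarTower k A M] (htn : t ^ (n + 1) = 0)
    (hann : ∀ a : A, t * a = 0 → ∃ c : k, c • t ^ n = a)
    (hM : ∀ m : M, t • m = 0 → ∃ m', t ^ n • m' = m) : Module.Free A M := by
  obtain ⟨b, hbsub, hspan, hbli⟩ := exists_linearIndependent k (Set.range (t ^ n • · : M → M))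
  choose lift hlift using fun i : b => hbsub i.2
  let φ := Finsupp.linearCombination A lift
  have hlifts : ∀ m ∈ Submodule.span k b, ∃ y ∈ LinearMap.range φ, t ^ n • y = m := by
    intro m hm
    induction hm using Submodule.span_induction with
    | mem m hm => exact ⟨_, ⟨Finsupp.single ⟨m, hm⟩ 1, by simp [φ]⟩, hlift ⟨m, hm⟩⟩
    | zero => exact ⟨0, zero_mem _, smul_zero _⟩
    | add m m' _ _ h h' =>
      obtain ⟨y, hy, rfl⟩ := h
      obtain ⟨y', hy', rfl⟩ := h'
      exact ⟨y + y', add_mem hy hy', smul_add _ _ _⟩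
    | smul c m _ h =>
      obtain ⟨y, hy, rfl⟩ := h
      exact ⟨c • y, Submodule.smul_of_tower_mem _ c hy, smul_comm _ _ _⟩
  have hsurj : LinearMap.range φ = ⊤ :=
    (LinearMap.range φ).eq_top_of_ker_smul_le_pow_smul
      (fun m => by rw [htn, zero_smul])
      fun m hm => hlifts m (hspan ▸ Submodule.subset_span (hM m hm))
  have hinj : Function.Injective φ := by
    refine φ.injective_of_eq_zero_of_smul_eq_zero (t := t) (n := n + 1)
      (fun x => by rw [htn, zero_smul]) fun x hx hφx => ?_
    choose! c hc using hann
    have hcoord : ∀ i, t * x i = 0 := fun i => by simpa using congrArg (· i) hx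
    have hsum : ∑ i ∈ x.support, c (x i) • (i : M) = 0 := by
      rw [← hφx, Finsupp.linearCombination_apply, Finsupp.sum]
      refine Finset.sum_congr rfl fun i _ => ?_
      rw [← hlift i, ← smul_assoc, hc _ (hcoord i)]
    ext i
    by_cases hi : i ∈ x.support
    · rw [← hc _ (hcoord i), linearIndependent_iff'.mp hbli _ _ hsum i hi, zero_smul]; rfl
    · simpa using hi
  exact Module.Free.of_equiv (LinearEquiv.ofBijective φ ⟨hinj, LinearMap.range_eq_top.mp hsurj⟩)

theorem Module.free_iff_forall_smul_eq_zero_exists_pow_smul {k : Type*} [Field k] [Algebra k A]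
    [Module k M] [IsScalarTower k A M] (htn : t ^ (n + 1) = 0)
    (hann : ∀ a : A, t * a = 0 → ∃ c : k, c • t ^ n = a) :
    Module.Free A M ↔ ∀ m : M, t • m = 0 → ∃ m', t ^ n • m' = m := by
  refine ⟨fun _ m => Module.Free.exists_pow_smul_eq_of_smul_eq_zero fun a ha => ?_,
    Module.free_of_forall_smul_eq_zero_exists_pow_smul htn hann⟩
  obtain ⟨c, rfl⟩ := hann a ha
  exact ⟨algebraMap k A c, by rw [← Algebra.commutes, Algebra.smul_def]⟩

end TruncatedPolynomialAction

section GroupAlgebra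

open MonoidAlgebra

theorem MonoidAlgebra.coeff_eq_coeff_one_of_of_mul_eq {k G : Type*} [Semiring k] [Group G]
    {g : G} {x : MonoidAlgebra k G} (hx : of k G g * x = x) {γ : G}
    (hγ : γ ∈ Subgroup.zpowers g) : x.coeff γ = x.coeff 1 := by
  suffices ∀ δ, x.coeff (γ * δ) = x.coeff δ by simpa using this 1
  rw [Subgroup.zpowers_eq_closure] at hγ
  induction hγ using Subgroup.closure_induction with
  | mem γ hγ =>
    rw [Set.mem_singleton_iff.mp hγ]
    intro δ
    conv_lhs => rw [← hx]
    simp [of_apply]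
  | one => simp
  | mul γ γ' _ _ h h' => intro δ; rw [mul_assoc, h, h']
  | inv γ _ h => intro δ; rw [← h, mul_inv_cancel_left]

theorem MonoidAlgebra.eq_coeff_one_smul_sum_of_of_mul_eq {k G : Type*} [Semiring k] [Group G]
    [Fintype G] {g : G} (hg : ∀ γ, γ ∈ Subgroup.zpowers g) {x : MonoidAlgebra k G}
    (hx : of k G g * x = x) : x = x.coeff 1 • ∑ γ, of k G γ := by
  ext γ
  simp [of_apply, coeff_eq_coeff_one_of_of_mul_eq hx (hg γ)]

variable (p : ℕ)

theorem sigma_pow (n : ℕ) :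
    sigma p ^ n = of (ZMod p) _ (Multiplicative.ofAdd (n : ZMod p)) := by
  rw [sigma, ← map_pow, ← ofAdd_nsmul, nsmul_one]

variable [Fact p.Prime]

theorem sigma_sub_one_pow_self : (sigma p - 1) ^ p = 0 := by
  have := charP_of_injective_algebraMap' (ZMod p) (A := Sp p) p
  rw [sub_pow_char, sigma_pow, ZMod.natCast_self, ofAdd_zero, map_one, one_pow, sub_self]

open Polynomial in
theorem sum_of_eq_sigma_sub_one_pow_pred :
    ∑ γ, of (ZMod p) _ γ = (sigma p - 1) ^ (p - 1) := by
  have hcyc : ((X : (ZMod p)[X]) - 1) ^ (p - 1) = ∑ i ∈ Finset.range p, X ^ i := by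
    have := cyclotomic_mul_prime_pow_eq (ZMod p) (p := p) (m := 1)
      (by simp [(Fact.out : p.Prime).ne_one]) one_pos
    simpa [cyclotomic_prime, cyclotomic_one] using this.symm
  have hsum := congrArg (aeval (sigma p)) hcyc
  simp only [map_pow, map_sub, aeval_X, map_one, map_sum, sigma_pow] at hsum
  rw [hsum]
  symm
  refine Finset.sum_nbij' (fun i => Multiplicative.ofAdd (i : ZMod p)) (fun γ => γ.toAdd.val)
    ?_ ?_ ?_ ?_ ?_ <;> simp +contextual [ZMod.val_lt, Nat.mod_eq_of_lt]

theorem eq_coeff_one_smul_of_sigma_sub_one_mul_eq_zero {a : Sp p} (ha : (sigma p - 1) * a = 0) :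
    a = a.coeff 1 • (sigma p - 1) ^ (p - 1) := by
  have hgen : ∀ γ : Multiplicative (ZMod p), γ ∈ Subgroup.zpowers (Multiplicative.ofAdd 1) :=
    fun γ => Subgroup.mem_zpowers_iff.mpr ⟨γ.toAdd.val, by simp [← ofAdd_zsmul]⟩
  rw [← sum_of_eq_sigma_sub_one_pow_pred]
  exact eq_coeff_one_smul_sum_of_of_mul_eq hgen (by rwa [sub_mul, one_mul, sub_eq_zero] at ha)

end GroupAlgebra

/-- `M` is a free `𝔽_p[ℤ/pℤ]`-module iff `M^H = (σ-1)^(p-1) M`. -/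
theorem stmt3 (p : ℕ) [Fact p.Prime] (M : Type*) [AddCommGroup M] [Module (Sp p) M] :
    Module.Free (Sp p) M ↔
      {m : M | sigma p • m = m} = Set.range (fun m : M => (sigma p - 1) ^ (p - 1) • m) := by
  have htn : (sigma p - 1) ^ (p - 1 + 1) = 0 := by
    rw [Nat.sub_add_cancel (Fact.out : p.Prime).one_le, sigma_sub_one_pow_self]
  have hfixed : ∀ m : M, sigma p • m = m ↔ (sigma p - 1) • m = 0 := by
    simp [sub_smul, sub_eq_zero]
  have hrange : Set.range (fun m : M => (sigma p - 1) ^ (p - 1) • m) ⊆ {m | sigma p • m = m} := by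
    rintro _ ⟨m, rfl⟩
    rw [Set.mem_ofPred_eq, hfixed, smul_smul, ← pow_succ', htn, zero_smul]
  let : Module (ZMod p) M := .compHom M (algebraMap (ZMod p) (Sp p))
  have := IsScalarTower.of_compHom (ZMod p) (Sp p) M
  rw [Module.free_iff_forall_smul_eq_zero_exists_pow_smul htn
    fun a ha => ⟨_, (eq_coeff_one_smul_of_sigma_sub_one_mul_eq_zero p ha).symm⟩,
    Set.Subset.antisymm_iff, and_iff_left hrange]
  simp only [Set.subset_def, Set.mem_ofPred_eq, Set.mem_range, hfixed]
end

section
/- Let p be a prime, H a cyclic group of order p, and M an 𝔽_p[H]-module. Then M contains a maximal free 𝔽_p[H]-submodule Y, and M decomposes as M = Y ⊕ R for some 𝔽_p[H]-submodule R. -/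
/-!
The argument only needs that the augmentation `𝔽_p[H] → 𝔽_p` has kernel generated by the
nilpotent element `ε = σ - 1`, so it is carried out for a `K`-algebra `R` with an augmentation
`π : R → K` whose kernel is `(ε)`, `ε` nilpotent of class `n`. Such an `R` is local, every
nonzero element is `ε ^ k` times a unit, its ideals are the `(ε ^ k)`, and
`ε ^ (n - 1) * a = π a • ε ^ (n - 1)`.

Lifting a `K`-basis of `ε ^ (n - 1) M` to `M` gives an `R`-linearly independent family: applying a
power of `ε` to a relation turns it into a `K`-linear relation among the basis vectors. Its span `Y`
is free with `ε ^ (n - 1) M = ε ^ (n - 1) Y`, and peeling off the `ε`-torsion layers of a free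
`Z ⊇ Y` shows `Z = Y`. In a free module `ε ^ (n - k) x = 0` forces `x ∈ ε ^ k N`, which is Baer's
criterion for the ideals `(ε ^ k)`; so `Y` is injective, hence a direct summand.
-/

lemma Finsupp.exists_eq_smul_of_forall_dvd {S ι : Type*} [Semiring S] {a : S} (f : ι →₀ S)
    (h : ∀ i, a ∣ f i) : ∃ g : ι →₀ S, f = a • g := by
  classical
  choose c hc using h
  refine ⟨f.support.sum fun i => Finsupp.single i (c i), ?_⟩
  conv_lhs => rw [← f.sum_single]
  simp only [Finsupp.sum, Finset.smul_sum, Finsupp.smul_single, smul_eq_mul, ← hc]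

lemma Submodule.exists_isCompl_of_baer {S M : Type*} [Ring S] [AddCommGroup M] [Module S M]
    (Y : Submodule S M) (hY : Module.Baer S Y) : ∃ C : Submodule S M, IsCompl Y C := by
  obtain ⟨r, hr⟩ := hY.extension_property Y.subtype Y.injective_subtype LinearMap.id
  exact ⟨LinearMap.ker r, LinearMap.isCompl_of_proj (LinearMap.congr_fun hr)⟩

lemma nilpotencyClass_sub_one_add_one {S : Type*} [MonoidWithZero S] [Nontrivial S] {x : S}
    (hx : IsNilpotent x) : nilpotencyClass x - 1 + 1 = nilpotencyClass x :=
  Nat.sub_add_cancel (pos_nilpotencyClass_iff.mpr hx)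

section Ring

variable {K R : Type*} [Field K] [CommRing R] [Algebra K R] {π : R →ₐ[K] K} {ε : R}

local notation "n" => nilpotencyClass ε

lemma dvd_sub_algebraMap_apply (hπ : RingHom.ker π = Ideal.span {ε}) (a : R) :
    ε ∣ a - algebraMap K R (π a) := by
  rw [← Ideal.mem_span_singleton, ← hπ, RingHom.mem_ker]
  simp

lemma isUnit_of_map_ne_zero (hπ : RingHom.ker π = Ideal.span {ε}) (hε : IsNilpotent ε) {a : R}
    (ha : π a ≠ 0) : IsUnit a := by
  obtain ⟨b, hb⟩ := dvd_sub_algebraMap_apply hπ a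
  have hnil : IsNilpotent (ε * b) := Commute.isNilpotent_mul_right (Commute.all _ _) hε
  rw [← sub_add_cancel a (algebraMap K R (π a)), hb]
  exact hnil.isUnit_add_right_of_commute ((isUnit_iff_ne_zero.mpr ha).map (algebraMap K R))
    (Commute.all _ _)

lemma exists_eq_pow_mul_of_ne_zero (hπ : RingHom.ker π = Ideal.span {ε})
    (hε : IsNilpotent ε) {a : R} (ha : a ≠ 0) : ∃ k u, IsUnit u ∧ a = ε ^ k * u := by
  classical
  set k := Nat.findGreatest (fun k => ε ^ k ∣ a) n
  obtain ⟨u, hu⟩ : ε ^ k ∣ a :=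
    Nat.findGreatest_spec (P := fun k => ε ^ k ∣ a) (Nat.zero_le n) (by simp)
  refine ⟨k, u, isUnit_of_map_ne_zero hπ hε fun hu0 => ?_, hu⟩
  obtain ⟨v, rfl⟩ : ε ∣ u := by simpa [hu0] using dvd_sub_algebraMap_apply hπ u
  have hk : k < n := by
    refine lt_of_le_of_ne (Nat.findGreatest_le n) fun hkn => ha ?_
    rw [hu, hkn, pow_nilpotencyClass hε, zero_mul]
  exact Nat.findGreatest_is_greatest (Nat.lt_succ_self k) hk ⟨v, by rw [hu, pow_succ, mul_assoc]⟩

lemma pow_pred_nilpotencyClass_mul (hπ : RingHom.ker π = Ideal.span {ε}) (hε : IsNilpotent ε)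
    (a : R) : ε ^ (n - 1) * a = π a • ε ^ (n - 1) := by
  have : Nontrivial R := π.toRingHom.domain_nontrivial
  obtain ⟨b, hb⟩ := dvd_sub_algebraMap_apply hπ a
  rw [← sub_eq_zero, Algebra.smul_def, mul_comm (algebraMap K R _), ← mul_sub, hb, ← mul_assoc,
    ← pow_succ, nilpotencyClass_sub_one_add_one hε, pow_nilpotencyClass hε, zero_mul]

lemma pow_dvd_of_pow_sub_mul_eq_zero (hπ : RingHom.ker π = Ideal.span {ε}) (hε : IsNilpotent ε)
    {k : ℕ} (hk : k ≤ n) {a : R} (h : ε ^ (n - k) * a = 0) : ε ^ k ∣ a := by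
  rcases eq_or_ne a 0 with rfl | ha
  · exact dvd_zero _
  obtain ⟨j, u, hu, rfl⟩ := exists_eq_pow_mul_of_ne_zero hπ hε ha
  rw [← mul_assoc, ← pow_add, hu.mul_left_eq_zero] at h
  have : n ≤ n - k + j := Nat.sInf_le h
  exact (pow_dvd_pow ε (by omega)).mul_right u

lemma Ideal.exists_eq_span_pow (hπ : RingHom.ker π = Ideal.span {ε})
    (hε : IsNilpotent ε) (I : Ideal R) : ∃ k ≤ n, I = Ideal.span {ε ^ k} := by
  classical
  have hn : ∃ k, ε ^ k ∈ I := ⟨n, by rw [pow_nilpotencyClass hε]; exact I.zero_mem⟩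
  refine ⟨min (Nat.find hn) n, min_le_right _ _, le_antisymm (fun a ha => ?_) ?_⟩
  · rcases eq_or_ne a 0 with rfl | ha0
    · exact Ideal.zero_mem _
    obtain ⟨j, u, hu, rfl⟩ := exists_eq_pow_mul_of_ne_zero hπ hε ha0
    have hj : ε ^ j ∈ I := (I.mul_unit_mem_iff_mem hu).mp ha
    have hkj : min (Nat.find hn) n ≤ j := (min_le_left _ _).trans (Nat.find_min' hn hj)
    exact Ideal.mem_span_singleton.mpr ((pow_dvd_pow ε hkj).mul_right u)
  · rw [Ideal.span_le, Set.singleton_subset_iff]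
    rcases min_choice (Nat.find hn) n with h | h <;> rw [h]
    · exact Nat.find_spec hn
    · rw [pow_nilpotencyClass hε]; exact I.zero_mem

variable {N : Type*} [AddCommGroup N] [Module R N]

lemma Module.Free.exists_eq_pow_smul (hπ : RingHom.ker π = Ideal.span {ε}) (hε : IsNilpotent ε)
    [Module.Free R N] {k : ℕ} (hk : k ≤ n) {x : N} (hx : ε ^ (n - k) • x = 0) :
    ∃ y, x = ε ^ k • y := by
  let b := Module.Free.chooseBasis R N
  obtain ⟨g, hg⟩ := Finsupp.exists_eq_smul_of_forall_dvd (b.repr x) fun i =>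
    pow_dvd_of_pow_sub_mul_eq_zero hπ hε hk <| by
      simpa using congr($(congrArg b.repr hx) i)
  exact ⟨b.repr.symm g, b.repr.injective (by rw [map_smul, LinearEquiv.apply_symm_apply, hg])⟩

lemma Module.Free.baer (hπ : RingHom.ker π = Ideal.span {ε}) (hε : IsNilpotent ε)
    [Module.Free R N] : Module.Baer R N := by
  intro I g
  obtain ⟨k, hk, rfl⟩ := Ideal.exists_eq_span_pow hπ hε I
  let e : Ideal.span {ε ^ k} := ⟨ε ^ k, Ideal.mem_span_singleton_self _⟩
  have hann : ε ^ (n - k) • e = 0 := Subtype.ext <| by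
    simp [e, ← pow_add, Nat.sub_add_cancel hk, pow_nilpotencyClass hε]
  obtain ⟨y, hy⟩ := Module.Free.exists_eq_pow_smul hπ hε hk (x := g e)
    (by rw [← map_smul, hann, map_zero])
  refine ⟨LinearMap.toSpanSingleton R N y, fun a ha => ?_⟩
  obtain ⟨c, rfl⟩ := Ideal.mem_span_singleton'.mp ha
  have : (⟨c * ε ^ k, ha⟩ : Ideal.span {ε ^ k}) = c • e := rfl
  rw [LinearMap.toSpanSingleton_apply, this, map_smul, hy, smul_smul]

variable {M : Type*} [AddCommGroup M] [Module R M]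

lemma Submodule.le_of_free_of_forall_pow_pred_smul (hπ : RingHom.ker π = Ideal.span {ε})
    (hε : IsNilpotent ε) {Y Z : Submodule R M} [Module.Free R Z] (hYZ : Y ≤ Z)
    (hY : ∀ x : M, ∃ u ∈ Y, ε ^ (n - 1) • x = ε ^ (n - 1) • u) : Z ≤ Y := by
  have : Nontrivial R := π.toRingHom.domain_nontrivial
  have hn : n - 1 + 1 = n := nilpotencyClass_sub_one_add_one hε
  suffices h : ∀ k ≤ n, ∀ x ∈ Z, ε ^ k • x = 0 → x ∈ Y from
    fun x hx => h n le_rfl x hx (by rw [pow_nilpotencyClass hε, zero_smul])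
  intro k
  induction k with
  | zero => intro _ x _ hx; rw [pow_zero, one_smul] at hx; rw [hx]; exact Y.zero_mem
  | succ k ih =>
    intro hk x hxZ hx
    have hann : ε ^ (n - (n - 1)) • (ε ^ k • ⟨x, hxZ⟩ : Z) = 0 := Subtype.ext <| by
      simp [show n - (n - 1) = 1 by omega, smul_smul, ← pow_succ', hx]
    obtain ⟨w, hw⟩ := Module.Free.exists_eq_pow_smul hπ hε (Nat.sub_le n 1) hann
    obtain ⟨u, huY, hu⟩ := hY w
    have hxu : x - ε ^ (n - 1 - k) • u ∈ Y := by
      refine ih (by omega) _ (Z.sub_mem hxZ (Z.smul_mem _ (hYZ huY))) ?_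
      have hw' : ε ^ k • x = ε ^ (n - 1) • (w : M) := congrArg Subtype.val hw
      rw [smul_sub, hw', hu, smul_smul, ← pow_add, Nat.add_sub_cancel' (by omega), sub_self]
    simpa using Y.add_mem hxu (Y.smul_mem (ε ^ (n - 1 - k)) huY)

section Socle

variable [Module K M] [IsScalarTower K R M]

lemma linearIndependent_of_pow_pred_smul (hπ : RingHom.ker π = Ideal.span {ε})
    (hε : IsNilpotent ε) {ι : Type*} {y : ι → M}
    (hy : LinearIndependent K fun i => ε ^ (n - 1) • y i) : LinearIndependent R y := by
  rw [linearIndependent_iff]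
  intro l hl
  suffices h : ∀ j ≤ n, ∃ g : ι →₀ R, l = ε ^ j • g by
    obtain ⟨g, rfl⟩ := h n le_rfl
    rw [pow_nilpotencyClass hε, zero_smul]
  intro j
  induction j with
  | zero => exact fun _ => ⟨l, by rw [pow_zero, one_smul]⟩
  | succ j ih =>
    intro hj
    obtain ⟨g, rfl⟩ := ih (by omega)
    have hsocle : Finsupp.linearCombination K (fun i => ε ^ (n - 1) • y i)
        (g.mapRange π (map_zero π)) = 0 := by
      have := congrArg (ε ^ (n - 1 - j) • ·) hl
      simp only [map_smul, smul_smul, ← pow_add, Nat.sub_add_cancel (by omega : j ≤ n - 1),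
        smul_zero] at this
      rw [← this, Finsupp.linearCombination_apply, Finsupp.linearCombination_apply,
        Finsupp.sum_mapRange_index (fun _ => zero_smul K (ε ^ (n - 1) • y _)), Finsupp.smul_sum]
      refine Finsupp.sum_congr fun i _ => ?_
      rw [smul_smul, pow_pred_nilpotencyClass_mul hπ hε, smul_assoc]
    have hπg := linearIndependent_iff.mp hy _ hsocle
    obtain ⟨g', rfl⟩ := Finsupp.exists_eq_smul_of_forall_dvd (a := ε) g fun i => by
      have hgi : π (g i) = 0 := by simpa using DFunLike.congr_fun hπg i
      simpa [hgi] using dvd_sub_algebraMap_apply hπ (g i)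
    exact ⟨g', by rw [smul_smul, ← pow_succ]⟩

lemma exists_free_submodule_forall_pow_pred_smul (hπ : RingHom.ker π = Ideal.span {ε})
    (hε : IsNilpotent ε) :
    ∃ Y : Submodule R M, Module.Free R Y ∧
      ∀ x : M, ∃ u ∈ Y, ε ^ (n - 1) • x = ε ^ (n - 1) • u := by
  let f : M →ₗ[R] M := ε ^ (n - 1) • LinearMap.id
  let V := (LinearMap.range f).restrictScalars K
  let b := Module.Basis.ofVectorSpace K V
  choose y hy using fun i => LinearMap.mem_range.mp (b i).2
  have hind : LinearIndependent K fun i => ε ^ (n - 1) • y i := by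
    rw [show (fun i => ε ^ (n - 1) • y i) = V.subtype ∘ b from funext hy]
    exact b.linearIndependent.map' V.subtype V.ker_subtype
  have hVspan : V = Submodule.span K (Set.range fun i => (b i : M)) := by
    conv_lhs => rw [← V.map_subtype_top, ← b.span_eq, Submodule.map_span, ← Set.range_comp]
    rfl
  have hV : V ≤ ((Submodule.span R (Set.range y)).map f).restrictScalars K := by
    refine hVspan.le.trans (Submodule.span_le.mpr ?_)
    rintro _ ⟨i, rfl⟩
    exact ⟨y i, Submodule.subset_span ⟨i, rfl⟩, hy i⟩
  refine ⟨_, .of_basis (.span (linearIndependent_of_pow_pred_smul hπ hε hind)), fun x => ?_⟩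
  obtain ⟨u, hu, hfu⟩ := hV (LinearMap.mem_range_self f x)
  exact ⟨u, hu, hfu.symm⟩

end Socle

theorem exists_maximal_free_submodule_isCompl (hπ : RingHom.ker π = Ideal.span {ε})
    (hε : IsNilpotent ε) (M : Type*) [AddCommGroup M] [Module R M] :
    ∃ Y : Submodule R M, Module.Free R Y ∧
      (∀ Z : Submodule R M, Module.Free R Z → Y ≤ Z → Y = Z) ∧
      ∃ C : Submodule R M, IsCompl Y C := by
  let _ : Module K M := Module.compHom M (algebraMap K R)
  have : IsScalarTower K R M := .of_algebraMap_smul fun _ _ => rfl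
  obtain ⟨Y, hYfree, hY⟩ := exists_free_submodule_forall_pow_pred_smul hπ hε (M := M)
  exact ⟨Y, hYfree, fun Z _ hYZ => le_antisymm hYZ
    (Submodule.le_of_free_of_forall_pow_pred_smul hπ hε hYZ hY),
    Y.exists_isCompl_of_baer (Module.Free.baer hπ hε)⟩

end Ring

section GroupAlgebra

variable (p : ℕ)

noncomputable def augmentation : Sp p →ₐ[ZMod p] ZMod p :=
  MonoidAlgebra.lift (ZMod p) (ZMod p) (Multiplicative (ZMod p)) 1

lemma of_eq_sigma_pow [NeZero p] (g : Multiplicative (ZMod p)) :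
    MonoidAlgebra.of (ZMod p) (Multiplicative (ZMod p)) g = sigma p ^ g.toAdd.val := by
  rw [sigma, ← map_pow, ← ofAdd_nsmul, nsmul_one, ZMod.natCast_zmod_val, ofAdd_toAdd]

lemma ker_augmentation [NeZero p] : RingHom.ker (augmentation p) = Ideal.span {sigma p - 1} := by
  refine le_antisymm (fun a ha => ?_) ?_
  · suffices h : ∀ a, sigma p - 1 ∣ a - algebraMap (ZMod p) (Sp p) (augmentation p a) by
      simpa [(RingHom.mem_ker).mp ha, Ideal.mem_span_singleton] using h a
    intro a
    induction a using MonoidAlgebra.induction_on with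
    | of g =>
      rw [augmentation, MonoidAlgebra.lift_of, MonoidHom.one_apply, map_one, of_eq_sigma_pow]
      exact sub_one_dvd_pow_sub_one _ _
    | add a b ha hb =>
      rw [map_add, map_add, add_sub_add_comm]
      exact dvd_add ha hb
    | smul c a ha =>
      rw [map_smul, smul_eq_mul, map_mul, Algebra.smul_def, ← mul_sub]
      exact dvd_mul_of_dvd_right ha _
  · rw [Ideal.span_le, Set.singleton_subset_iff, SetLike.mem_coe, RingHom.mem_ker]
    simp [augmentation, sigma]

lemma isNilpotent_sigma_sub_one [Fact p.Prime] : IsNilpotent (sigma p - 1) := by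
  have : CharP (Sp p) p := charP_of_injective_algebraMap' (ZMod p) p
  refine ⟨p, ?_⟩
  rw [sub_pow_char, one_pow, sigma, ← map_pow, ← ofAdd_nsmul, nsmul_one, ZMod.natCast_self,
    ofAdd_zero, map_one, sub_self]

end GroupAlgebra

/-- Every `𝔽_p[ℤ/pℤ]`-module contains a maximal free submodule `Y`, which is a
direct summand. -/
theorem stmt5 (p : ℕ) [Fact p.Prime] (M : Type*) [AddCommGroup M] [Module (Sp p) M] :
    ∃ Y : Submodule (Sp p) M, Module.Free (Sp p) Y ∧
      (∀ Z : Submodule (Sp p) M, Module.Free (Sp p) Z → Y ≤ Z → Y = Z) ∧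
      ∃ R : Submodule (Sp p) M, IsCompl Y R :=
  exists_maximal_free_submodule_isCompl (ker_augmentation p) (isNilpotent_sigma_sub_one p) M
end

section
/- Let H and Q be elementary abelian 2-groups (𝔽₂-vector spaces, H written multiplicatively), with |H| = g > 2 finite and |Q| = h > 1 finite. Let γ: H × H → Q be a bilinear form such that: (i) γ is nondegenerate, i.e., for every a ∈ H \ {1} the map γ_a = γ(a,−): H → Q is nonzero; (ii) γ is strongly regular, i.e., γ_a is surjective for every a ∈ H \ {1}; (iii) γ satisfies the linkage condition: if γ(a,b) = γ(c,d) then there exists e ∈ H with γ(a,b) = γ(a,e) = γ(c,e) = γ(c,d). Then h = 2, i.e., Q has order 2. -/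
section aux

variable {H Q : Type*} [AddCommGroup H] [Module (ZMod 2) H]
    [AddCommGroup Q] [Module (ZMod 2) Q] [Finite H] [Finite Q]

lemma aux_card_dual (V : Type*) [AddCommGroup V] [Module (ZMod 2) V] [Finite V] :
    Nat.card (Module.Dual (ZMod 2) V) = Nat.card V := by
  have : Fintype V := Fintype.ofFinite V
  have : Module.Finite (ZMod 2) V := Module.Finite.of_finite
  have : Finite (Module.Dual (ZMod 2) V) :=
    Finite.of_injective _ (DFunLike.coe_injective (F := Module.Dual (ZMod 2) V))
  have : Fintype (Module.Dual (ZMod 2) V) := Fintype.ofFinite _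
  rw [Nat.card_eq_fintype_card, Nat.card_eq_fintype_card,
    Module.card_eq_pow_finrank (K := ZMod 2), Module.card_eq_pow_finrank (K := ZMod 2) (V := V),
    Subspace.dual_finrank_eq]

end aux

/-- A strongly regular nondegenerate bilinear pairing on finite `𝔽₂`-vector spaces
satisfying the linkage condition, with `|H| > 2` and `|Q| > 1`, has `|Q| = 2`. -/
theorem stmt7 (H Q : Type*) [AddCommGroup H] [Module (ZMod 2) H]
    [AddCommGroup Q] [Module (ZMod 2) Q] [Finite H] [Finite Q]
    (hg : 2 < Nat.card H) (hh : 1 < Nat.card Q)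
    (γ : H →ₗ[ZMod 2] H →ₗ[ZMod 2] Q)
    (hnd : ∀ a : H, a ≠ 0 → γ a ≠ 0)
    (hsr : ∀ a : H, a ≠ 0 → Function.Surjective (γ a))
    (hlink : ∀ a b c d : H, γ a b = γ c d →
      ∃ e : H, γ a b = γ a e ∧ γ a e = γ c e ∧ γ c e = γ c d) :
    Nat.card Q = 2 := by
  classical
  -- key: annihilators of distinct nonzero elements span H
  have hsup : ∀ a b : H, a ≠ 0 → b ≠ 0 → a ≠ b →
      (LinearMap.ker (γ a)) ⊔ (LinearMap.ker (γ b)) = ⊤ := by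
    intro a b ha hb hab
    rw [eq_top_iff]
    rintro x -
    have hc : a - b ≠ 0 := sub_ne_zero.mpr hab
    obtain ⟨d, hd⟩ := hsr (a - b) hc (γ a x)
    obtain ⟨e, h1, h2, h3⟩ := hlink a x (a - b) d hd.symm
    have hsub : γ (a - b) e = γ a e - γ b e := by simp [map_sub]
    have he : γ b e = 0 := by
      have h4 : γ a e = γ a e - γ b e := h2.trans hsub
      exact sub_eq_self.mp h4.symm
    have hx : γ a (x - e) = 0 := by rw [map_sub, h1, sub_self]
    have : x = (x - e) + e := by abel
    rw [this]
    exact Submodule.add_mem_sup hx he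
  -- dual space injection
  have hfinQd : Finite (Module.Dual (ZMod 2) Q) :=
    Finite.of_injective _ (DFunLike.coe_injective (F := Module.Dual (ZMod 2) Q))
  have hfinHd : Finite (Module.Dual (ZMod 2) H) :=
    Finite.of_injective _ (DFunLike.coe_injective (F := Module.Dual (ZMod 2) H))
  set F : {a : H // a ≠ 0} × {φ : Module.Dual (ZMod 2) Q // φ ≠ 0} →
      {ξ : Module.Dual (ZMod 2) H // ξ ≠ 0} := fun p =>
    ⟨(p.2 : Module.Dual (ZMod 2) Q).comp (γ p.1), by
      obtain ⟨⟨a, ha⟩, ⟨φ, hφ⟩⟩ := p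
      intro h0
      apply hφ
      ext q
      obtain ⟨x, hx⟩ := hsr a ha q
      have := LinearMap.congr_fun h0 x
      simpa [hx] using this⟩ with hF
  have hFinj : Function.Injective F := by
    rintro ⟨⟨a, ha⟩, ⟨φ, hφ⟩⟩ ⟨⟨c, hc⟩, ⟨ψ, hψ⟩⟩ h
    have heq : φ.comp (γ a) = ψ.comp (γ c) := congrArg Subtype.val h
    by_cases hac : a = c
    · subst hac
      have : φ = ψ := by
        ext q
        obtain ⟨x, hx⟩ := hsr a ha q
        have := LinearMap.congr_fun heq x
        simpa [hx] using this
      simp [this]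
    · exfalso
      have hz : φ.comp (γ a) = 0 := by
        have hker : (⊤ : Submodule (ZMod 2) H) ≤ LinearMap.ker (φ.comp (γ a)) := by
          rw [← hsup a c ha hc hac]
          apply sup_le
          · intro x hx
            simp only [LinearMap.mem_ker] at hx ⊢
            simp [hx]
          · intro x hx
            simp only [LinearMap.mem_ker] at hx ⊢
            rw [heq]
            simp [hx]
        ext x
        simpa using hker (Submodule.mem_top (x := x))
      apply hφ
      ext q
      obtain ⟨x, hx⟩ := hsr a ha q
      have := LinearMap.congr_fun hz x
      simpa [hx] using this
  have hcard := Nat.card_le_card_of_injective F hFinj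
  rw [Nat.card_prod] at hcard
  have c1 : Nat.card {a : H // a ≠ 0} = Nat.card H - 1 := by
    have : Fintype H := Fintype.ofFinite H
    simp [Nat.card_eq_fintype_card, Fintype.card_subtype_compl (p := fun a : H => a = 0),
      Fintype.card_subtype_eq (0 : H)]
  have c2 : Nat.card {φ : Module.Dual (ZMod 2) Q // φ ≠ 0}
      = Nat.card Q - 1 := by
    have : Fintype (Module.Dual (ZMod 2) Q) := Fintype.ofFinite _
    rw [Nat.card_eq_fintype_card,
      Fintype.card_subtype_compl (p := fun φ : Module.Dual (ZMod 2) Q => φ = 0),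
      Fintype.card_subtype_eq (0 : Module.Dual (ZMod 2) Q),
      ← Nat.card_eq_fintype_card, aux_card_dual]
  have c3 : Nat.card {ξ : Module.Dual (ZMod 2) H // ξ ≠ 0}
      = Nat.card H - 1 := by
    have : Fintype (Module.Dual (ZMod 2) H) := Fintype.ofFinite _
    rw [Nat.card_eq_fintype_card,
      Fintype.card_subtype_compl (p := fun φ : Module.Dual (ZMod 2) H => φ = 0),
      Fintype.card_subtype_eq (0 : Module.Dual (ZMod 2) H),
      ← Nat.card_eq_fintype_card, aux_card_dual]
  rw [c1, c2, c3] at hcard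
  -- (g-1)(h-1) ≤ g-1 with g ≥ 3, h ≥ 2
  have hq : Nat.card Q - 1 ≤ 1 := by
    by_contra hq
    push_neg at hq
    have h2le : (Nat.card H - 1) * 2 ≤ (Nat.card H - 1) * (Nat.card Q - 1) :=
      Nat.mul_le_mul_left _ (by omega)
    omega
  omega
end

section
/- Let H and Q be 𝔽₂-vector spaces with dim H ≥ 2, and let γ: H × H → Q be a strongly regular, nondegenerate, symmetric bilinear form satisfying the linkage condition. Then for any two distinct nonzero elements a, b ∈ H, the annihilators satisfy ann(a) + ann(b) = H. -/
/-- For a strongly regular, nondegenerate, symmetric bilinear form over `𝔽₂`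
satisfying the linkage condition, `ann(a) + ann(b) = H` for distinct nonzero `a, b`. -/
theorem stmt8 (H Q : Type*) [AddCommGroup H] [Module (ZMod 2) H]
    [AddCommGroup Q] [Module (ZMod 2) Q]
    (hdim : 2 ≤ Module.rank (ZMod 2) H)
    (γ : H →ₗ[ZMod 2] H →ₗ[ZMod 2] Q)
    (hsymm : ∀ a b : H, γ a b = γ b a)
    (hnd : ∀ a : H, a ≠ 0 → γ a ≠ 0)
    (hsr : ∀ a : H, a ≠ 0 → Function.Surjective (γ a))
    (hlink : ∀ a b c d : H, γ a b = γ c d →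
      ∃ e : H, γ a b = γ a e ∧ γ a e = γ c e ∧ γ c e = γ c d) :
    ∀ a b : H, a ≠ 0 → b ≠ 0 → a ≠ b →
      LinearMap.ker (γ a) ⊔ LinearMap.ker (γ b) = ⊤ := by
  intro a b ha hb hab
  have hab' : a + b ≠ 0 := by
    intro h
    apply hab
    have : a = -b := eq_neg_of_add_eq_zero_left h
    rw [this]
    have : (-1 : ZMod 2) = 1 := by decide
    calc -b = (-1 : ZMod 2) • b := by rw [neg_one_smul]
    _ = b := by rw [this, one_smul]
  rw [eq_top_iff]
  intro x _
  obtain ⟨y, hy⟩ := hsr (a + b) hab' (γ a x)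
  obtain ⟨e, h1, h2, _⟩ := hlink a x (a + b) y hy.symm
  have hbe : γ b e = 0 := by
    have := h2
    rw [map_add, LinearMap.add_apply] at this
    exact (left_eq_add.mp this)
  have hae : γ a (x - e) = 0 := by
    rw [map_sub, h1, sub_self]
  have : x = (x - e) + e := (sub_add_cancel x e).symm
  rw [this]
  exact Submodule.add_mem_sup hae hbe
end

section
/- Uniqueness/characterization of decompositions (abstract Theorem 3): In the setting of the abstract structure theorem (M an 𝔽_p[H]-module, H = ⟨σ⟩ of order p, c: M → A surjective with ker c = (σ−1)M, r: A → M with r∘c = (σ−1)^{p−1}, c(M^H) = ker r, and M^H ∩ (σ−1)M = (σ−1)^{p−1}M), suppose X is a trivial 𝔽_p[H]-submodule and Y a free 𝔽_p[H]-submodule of M. Then c(X) ⊆ ker r, and the following are equivalent: (1) c restricts to an isomorphism X → ker r and Y is a maximal free 𝔽_p[H]-submodule of M; (2) M = X ⊕ Y. -/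
/-- Scalar multiplication by `s ∈ 𝔽_p[H]` as an `𝔽_p`-linear endomorphism. -/
noncomputable def smulMap (p : ℕ) (M : Type*) [AddCommGroup M] [Module (Sp p) M]
    [Module (ZMod p) M] [IsScalarTower (ZMod p) (Sp p) M] (s : Sp p) :
    M →ₗ[ZMod p] M :=
  (LinearMap.lsmul (Sp p) M s).restrictScalars (ZMod p)

namespace Submodule

variable {R M : Type*}

theorem eq_top_of_forall_mem_add_smul_of_isNilpotent [Semiring R] [AddCommMonoid M] [Module R M]
    {a : R} (ha : IsNilpotent a) {N : Submodule R M} (h : ∀ m, ∃ n ∈ N, ∃ w, m = n + a • w) :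
    N = ⊤ := by
  obtain ⟨k, hk⟩ := ha
  have hpow : ∀ j m, ∃ n ∈ N, ∃ w, m = n + a ^ j • w := by
    intro j
    induction j with
    | zero => exact fun m => ⟨0, N.zero_mem, m, by rw [pow_zero, one_smul, zero_add]⟩
    | succ j ih =>
      intro m
      obtain ⟨n, hn, w, rfl⟩ := ih m
      obtain ⟨n', hn', w', rfl⟩ := h w
      exact ⟨n + a ^ j • n', N.add_mem hn (N.smul_mem _ hn'), w',
        by rw [smul_add, smul_smul, ← pow_succ, add_assoc]⟩
  refine eq_top_iff'.mpr fun m => ?_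
  obtain ⟨n, hn, w, rfl⟩ := hpow k m
  rwa [hk, zero_smul, add_zero]

variable [Ring R] [AddCommGroup M] [Module R M]

theorem free_sup_of_disjoint {N₁ N₂ : Submodule R M} [Module.Free R N₁] [Module.Free R N₂]
    (hd : Disjoint N₁ N₂) : Module.Free R ↥(N₁ ⊔ N₂) := by
  have hinj : Function.Injective (N₁.subtype.coprod N₂.subtype) := by
    rw [← LinearMap.ker_eq_bot, LinearMap.ker_coprod_of_disjoint_range, ker_subtype, ker_subtype,
      prod_bot]
    rwa [range_subtype, range_subtype]
  exact .of_equiv ((LinearEquiv.ofInjective _ hinj).trans (.ofEq _ _ (sup_eq_range N₁ N₂).symm))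

theorem free_span_singleton {n : M} (h : ∀ r : R, r • n = 0 → r = 0) : Module.Free R (R ∙ n) := by
  have hinj : Function.Injective (LinearMap.toSpanSingleton R M n) :=
    (injective_iff_map_eq_zero _).mpr h
  exact .of_equiv ((LinearEquiv.ofInjective _ hinj).trans
    (.ofEq _ _ (LinearMap.span_singleton_eq_range R M n).symm))

end Submodule

section GroupAlgebra

variable (p : ℕ)
local notation "π" => sigma p - 1

lemma of_ofAdd_natCast (n : ℕ) :
    MonoidAlgebra.of (ZMod p) (Multiplicative (ZMod p)) (Multiplicative.ofAdd (n : ZMod p)) =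
      sigma p ^ n := by
  rw [sigma, ← map_pow, ← ofAdd_nsmul, nsmul_one]

lemma sigma_pow_prime : sigma p ^ p = 1 := by
  rw [← of_ofAdd_natCast, ZMod.natCast_self, ofAdd_zero, map_one]

variable [Fact p.Prime]

instance : CharP (Sp p) p := charP_of_injective_algebraMap' (ZMod p) p

lemma pi_pow_prime : π ^ p = 0 := by
  rw [sub_pow_char, sigma_pow_prime, one_pow, sub_self]

lemma exists_eq_algebraMap_add_pi_mul (s : Sp p) :
    ∃ (a : ZMod p) (t : Sp p), s = algebraMap (ZMod p) (Sp p) a + π * t := by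
  induction s using MonoidAlgebra.induction_on with
  | of g =>
    refine ⟨1, ∑ i ∈ Finset.range g.toAdd.val, sigma p ^ i, ?_⟩
    rw [map_one, mul_comm, geom_sum_mul, ← of_ofAdd_natCast, ZMod.natCast_zmod_val, ofAdd_toAdd]
    ring
  | add x y hx hy =>
    obtain ⟨a, t, rfl⟩ := hx
    obtain ⟨b, u, rfl⟩ := hy
    exact ⟨a + b, t + u, by rw [map_add]; ring⟩
  | smul b x hx =>
    obtain ⟨a, t, rfl⟩ := hx
    exact ⟨b * a, b • t, by simp only [Algebra.smul_def, map_mul]; ring⟩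

lemma isUnit_algebraMap_add_pi_mul {a : ZMod p} (ha : a ≠ 0) (t : Sp p) :
    IsUnit (algebraMap (ZMod p) (Sp p) a + π * t) :=
  (IsNilpotent.isUnit_add_left_of_commute ⟨p, by rw [mul_pow, pi_pow_prime, zero_mul]⟩
    ((isUnit_iff_ne_zero.mpr ha).map _) (Commute.all _ _))

lemma finrank_sp : Module.finrank (ZMod p) (Sp p) = p := by
  rw [Module.finrank_eq_card_basis (MonoidAlgebra.basis (Multiplicative (ZMod p)) (ZMod p)),
    Fintype.card_multiplicative, ZMod.card]

lemma exists_mem_span_pi_pow_add (k : ℕ) (s : Sp p) :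
    ∃ v ∈ Submodule.span (ZMod p) ↑((Finset.range k).image (π ^ ·)), ∃ t, s = v + π ^ k * t := by
  induction k with
  | zero => exact ⟨0, zero_mem _, s, by rw [pow_zero, one_mul, zero_add]⟩
  | succ k ih =>
    obtain ⟨v, hv, t, rfl⟩ := ih
    obtain ⟨a, t', rfl⟩ := exists_eq_algebraMap_add_pi_mul p t
    have hmono : Finset.range k ⊆ Finset.range (k + 1) := Finset.range_subset_range.mpr k.le_succ
    refine ⟨v + a • π ^ k, add_mem (Submodule.span_mono ?_ hv)
      (Submodule.smul_mem _ _ (Submodule.subset_span ?_)), t', ?_⟩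
    · exact_mod_cast Finset.image_subset_image hmono
    · exact Finset.mem_coe.mpr (Finset.mem_image_of_mem _ (Finset.self_mem_range_succ k))
    · rw [Algebra.smul_def, pow_succ]; ring

lemma pi_pow_ne_zero {k : ℕ} (hk : k < p) : π ^ k ≠ 0 := by
  intro h
  have htop : Submodule.span (ZMod p) ↑((Finset.range k).image (π ^ ·)) = ⊤ :=
    eq_top_iff.mpr fun s _ => by
      obtain ⟨v, hv, t, rfl⟩ := exists_mem_span_pi_pow_add p k s
      rwa [h, zero_mul, add_zero]
  have hle := finrank_span_finset_le_card (R := ZMod p) ((Finset.range k).image (π ^ ·))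
  rw [Set.finrank, htop, finrank_top, finrank_sp] at hle
  exact (hle.trans (Finset.card_image_le.trans (Finset.card_range k).le)).not_gt hk

lemma exists_eq_pi_pow_mul_or_eq_pi_pow_mul_isUnit (k : ℕ) (s : Sp p) :
    (∃ t, s = π ^ k * t) ∨ ∃ j < k, ∃ u, IsUnit u ∧ s = π ^ j * u := by
  induction k with
  | zero => exact .inl ⟨s, by rw [pow_zero, one_mul]⟩
  | succ k ih =>
    rcases ih with ⟨t, rfl⟩ | ⟨j, hj, u, hu, rfl⟩
    · obtain ⟨a, t', rfl⟩ := exists_eq_algebraMap_add_pi_mul p t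
      by_cases ha : a = 0
      · exact .inl ⟨t', by rw [ha, map_zero, zero_add, ← mul_assoc, ← pow_succ]⟩
      · exact .inr ⟨k, k.lt_succ_self, _, isUnit_algebraMap_add_pi_mul p ha t', rfl⟩
    · exact .inr ⟨j, hj.trans k.lt_succ_self, u, hu, rfl⟩

lemma exists_eq_pi_pow_mul_isUnit {s : Sp p} (hs : s ≠ 0) :
    ∃ j < p, ∃ u, IsUnit u ∧ s = π ^ j * u :=
  (exists_eq_pi_pow_mul_or_eq_pi_pow_mul_isUnit p p s).resolve_left fun ⟨t, ht⟩ =>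
    hs (by rw [ht, pi_pow_prime, zero_mul])

lemma exists_mul_eq_pi_pow_pred {s : Sp p} (hs : s ≠ 0) : ∃ t, t * s = π ^ (p - 1) := by
  obtain ⟨j, hj, u, hu, rfl⟩ := exists_eq_pi_pow_mul_isUnit p hs
  refine ⟨π ^ (p - 1 - j) * ↑hu.unit⁻¹, ?_⟩
  calc π ^ (p - 1 - j) * ↑hu.unit⁻¹ * (π ^ j * u)
      _ = π ^ (p - 1 - j + j) * (↑hu.unit⁻¹ * u) := by ring
      _ = π ^ (p - 1) := by
        rw [Nat.sub_add_cancel (Nat.le_sub_one_of_lt hj), hu.val_inv_mul, mul_one]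

lemma exists_eq_pi_pow_pred_mul_of_pi_mul_eq_zero {s : Sp p} (h : π * s = 0) :
    ∃ t, s = π ^ (p - 1) * t := by
  rcases eq_or_ne s 0 with rfl | hs
  · exact ⟨0, (mul_zero _).symm⟩
  obtain ⟨j, hj, u, hu, rfl⟩ := exists_eq_pi_pow_mul_isUnit p hs
  have hpow : π ^ (j + 1) = 0 := by
    rw [← hu.mul_left_eq_zero, pow_succ', mul_assoc, h]
  have hjp : j = p - 1 := by
    by_contra hne
    exact pi_pow_ne_zero p (k := j + 1) (by omega) hpow
  exact ⟨u, by rw [hjp]⟩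

end GroupAlgebra

section FreeModules

variable (p : ℕ) [Fact p.Prime] {M : Type*} [AddCommGroup M] [Module (Sp p) M]
local notation "π" => sigma p - 1

lemma pi_pow_pred_smul (m : M) : π ^ (p - 1) • m = π • (π ^ (p - 2) • m) := by
  have hp : p - 2 + 1 = p - 1 := by have := (Fact.out : p.Prime).two_le; omega
  rw [← mul_smul, ← pow_succ', hp]

lemma pi_pow_pred_smul_eq_zero {m : M} (h : π • m = 0) : π ^ (p - 1) • m = 0 := by
  rw [pi_pow_pred_smul, smul_comm, h, smul_zero]

lemma exists_eq_pi_pow_pred_smul_of_free [Module.Free (Sp p) M] {y : M} (h : π • y = 0) :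
    ∃ z, y = π ^ (p - 1) • z := by
  classical
  let B := Module.Free.chooseBasis (Sp p) M
  have hcoord : ∀ i, π * B.repr y i = 0 := fun i => by
    simpa using congr(B.repr $h i)
  choose t ht using fun i => exists_eq_pi_pow_pred_mul_of_pi_mul_eq_zero p (hcoord i)
  refine ⟨∑ i ∈ (B.repr y).support, t i • B i, ?_⟩
  conv_lhs => rw [← B.linearCombination_repr y, Finsupp.linearCombination_apply, Finsupp.sum]
  rw [Finset.smul_sum]
  exact Finset.sum_congr rfl fun i _ => by rw [smul_smul, ← ht]

lemma Submodule.exists_mem_eq_pi_pow_pred_smul {Y : Submodule (Sp p) M} [Module.Free (Sp p) Y]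
    {y : M} (hy : y ∈ Y) (h : π • y = 0) : ∃ z ∈ Y, y = π ^ (p - 1) • z := by
  obtain ⟨z, hz⟩ := exists_eq_pi_pow_pred_smul_of_free p (M := Y) (y := ⟨y, hy⟩)
    (Subtype.ext h)
  exact ⟨z, z.2, congr_arg Subtype.val hz⟩

lemma pi_pow_pred_smul_mem_of_maximal {Y : Submodule (Sp p) M} [Module.Free (Sp p) Y]
    (hmax : ∀ Z : Submodule (Sp p) M, Module.Free (Sp p) Z → Y ≤ Z → Y = Z) (n : M) :
    π ^ (p - 1) • n ∈ Y := by
  by_contra hn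
  have hann : ∀ s : Sp p, s • n ∈ Y → s = 0 := by
    intro s hs
    by_contra hs0
    obtain ⟨t, ht⟩ := exists_mul_eq_pi_pow_pred p hs0
    exact hn (ht ▸ mul_smul t s n ▸ Y.smul_mem t hs)
  have hd : Disjoint Y (Sp p ∙ n) := Submodule.disjoint_def.mpr fun v hvY hvn => by
    obtain ⟨s, rfl⟩ := Submodule.mem_span_singleton.mp hvn
    rw [hann s hvY, zero_smul]
  have : Module.Free (Sp p) (Sp p ∙ n) :=
    Submodule.free_span_singleton fun s hs => hann s (hs ▸ Y.zero_mem)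
  have hY := hmax _ (Submodule.free_sup_of_disjoint hd) le_sup_left
  exact hn (Y.smul_mem _ (hY ▸ Submodule.mem_sup_right (Submodule.mem_span_singleton_self n)))

lemma pi_pow_pred_smul_mem_of_sup_eq_top {X Y : Submodule (Sp p) M} (hX : ∀ x ∈ X, π • x = 0)
    (hXY : X ⊔ Y = ⊤) (m : M) : π ^ (p - 1) • m ∈ Y := by
  obtain ⟨x, hx, y, hy, rfl⟩ := Submodule.mem_sup.mp (hXY ▸ Submodule.mem_top : m ∈ X ⊔ Y)
  rw [smul_add, pi_pow_pred_smul_eq_zero p (hX x hx), zero_add]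
  exact Y.smul_mem _ hy

lemma eq_zero_of_mem_of_eq_pi_pow_pred_smul {X Y : Submodule (Sp p) M}
    (hX : ∀ x ∈ X, π • x = 0) (hC : IsCompl X Y) {x : M} (hx : x ∈ X) {m : M}
    (h : x = π ^ (p - 1) • m) : x = 0 :=
  Submodule.disjoint_def.mp hC.disjoint x hx
    (h ▸ pi_pow_pred_smul_mem_of_sup_eq_top p hX hC.sup_eq_top m)

lemma eq_of_le_of_free_of_isCompl {X Y Z : Submodule (Sp p) M} [Module.Free (Sp p) Z]
    (hX : ∀ x ∈ X, π • x = 0) (hC : IsCompl X Y) (hYZ : Y ≤ Z) : Y = Z := by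
  refine le_antisymm hYZ fun z hz => ?_
  obtain ⟨x, hx, y, hy, rfl⟩ :=
    Submodule.mem_sup.mp (hC.sup_eq_top ▸ Submodule.mem_top : z ∈ X ⊔ Y)
  have hxZ : x ∈ Z := by simpa using Z.sub_mem hz (hYZ hy)
  obtain ⟨w, -, hw⟩ := Z.exists_mem_eq_pi_pow_pred_smul p hxZ (hX x hx)
  rwa [eq_zero_of_mem_of_eq_pi_pow_pred_smul p hX hC hx hw, zero_add]

end FreeModules

section Decomposition

variable {p : ℕ} {M A : Type*} [AddCommGroup M] [Module (Sp p) M] [Module (ZMod p) M]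
  [AddCommGroup A] [Module (ZMod p) A] {c : M →ₗ[ZMod p] A} {r : A →ₗ[ZMod p] M}
  {X Y : Submodule (Sp p) M}
local notation "π" => sigma p - 1

lemma smulMap_apply [IsScalarTower (ZMod p) (Sp p) M] (s : Sp p) (m : M) :
    smulMap p M s m = s • m := rfl

lemma map_pi_smul_eq_zero [IsScalarTower (ZMod p) (Sp p) M]
    (hker : LinearMap.ker c = LinearMap.range (smulMap p M π)) (m : M) : c (π • m) = 0 :=
  LinearMap.mem_ker.mp (hker ▸ LinearMap.mem_range_self _ m)

lemma exists_pi_smul_eq_of_map_eq_zero [IsScalarTower (ZMod p) (Sp p) M]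
    (hker : LinearMap.ker c = LinearMap.range (smulMap p M π)) {m : M} (h : c m = 0) :
    ∃ w, π • w = m :=
  LinearMap.mem_range.mp (hker ▸ LinearMap.mem_ker.mpr h)

variable [Fact p.Prime]

lemma mapsTo_ker (hrc : ∀ m : M, r (c m) = π ^ (p - 1) • m) (hX : ∀ x ∈ X, π • x = 0) :
    Set.MapsTo c X (LinearMap.ker r) := fun x hx => by
  rw [SetLike.mem_coe, LinearMap.mem_ker, hrc, pi_pow_pred_smul_eq_zero p (hX x hx)]

lemma injOn_of_isCompl [IsScalarTower (ZMod p) (Sp p) M]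
    (hker : LinearMap.ker c = LinearMap.range (smulMap p M π))
    (hmeet : LinearMap.ker (smulMap p M π) ⊓ LinearMap.range (smulMap p M π) =
      LinearMap.range (smulMap p M (π ^ (p - 1))))
    (hX : ∀ x ∈ X, π • x = 0) (hC : IsCompl X Y) : Set.InjOn c X := by
  intro x₁ hx₁ x₂ hx₂ h
  have hd : x₁ - x₂ ∈ X := X.sub_mem hx₁ hx₂
  have hmem : x₁ - x₂ ∈ LinearMap.ker (smulMap p M π) ⊓ LinearMap.range (smulMap p M π) :=
    ⟨hX _ hd, hker ▸ LinearMap.mem_ker.mpr (by rw [map_sub, h, sub_self])⟩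
  rw [hmeet] at hmem
  obtain ⟨m, hm⟩ := hmem
  exact sub_eq_zero.mp (eq_zero_of_mem_of_eq_pi_pow_pred_smul p hX hC hd hm.symm)

lemma surjOn_of_sup_eq_top [IsScalarTower (ZMod p) (Sp p) M] [Module.Free (Sp p) Y]
    (hker : LinearMap.ker c = LinearMap.range (smulMap p M π))
    (hfix : Submodule.map c (LinearMap.ker (smulMap p M π)) = LinearMap.ker r)
    (hX : ∀ x ∈ X, π • x = 0) (hXY : X ⊔ Y = ⊤) : Set.SurjOn c X (LinearMap.ker r) := by
  intro a ha
  rw [SetLike.mem_coe, ← hfix] at ha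
  obtain ⟨m, hm, rfl⟩ := ha
  obtain ⟨x, hx, y, hy, rfl⟩ := Submodule.mem_sup.mp (hXY ▸ Submodule.mem_top : m ∈ X ⊔ Y)
  have hy0 : π • y = 0 := by
    rwa [SetLike.mem_coe, LinearMap.mem_ker, smulMap_apply, smul_add, hX x hx, zero_add] at hm
  obtain ⟨z, -, rfl⟩ := Y.exists_mem_eq_pi_pow_pred_smul p hy hy0
  exact ⟨x, hx, by rw [map_add, pi_pow_pred_smul, map_pi_smul_eq_zero hker, add_zero]⟩

lemma disjoint_of_injOn [IsScalarTower (ZMod p) (Sp p) M] [Module.Free (Sp p) Y]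
    (hker : LinearMap.ker c = LinearMap.range (smulMap p M π))
    (hX : ∀ x ∈ X, π • x = 0) (hinj : Set.InjOn c X) : Disjoint X Y :=
  Submodule.disjoint_def.mpr fun x hxX hxY => by
    obtain ⟨z, -, rfl⟩ := Y.exists_mem_eq_pi_pow_pred_smul p hxY (hX x hxX)
    exact hinj hxX X.zero_mem (by rw [map_zero, pi_pow_pred_smul, map_pi_smul_eq_zero hker])

lemma sup_eq_top_of_surjOn_of_maximal [IsScalarTower (ZMod p) (Sp p) M] [Module.Free (Sp p) Y]
    (hrc : ∀ m : M, r (c m) = π ^ (p - 1) • m)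
    (hker : LinearMap.ker c = LinearMap.range (smulMap p M π))
    (hsurj : Set.SurjOn c X (LinearMap.ker r))
    (hmax : ∀ Z : Submodule (Sp p) M, Module.Free (Sp p) Z → Y ≤ Z → Y = Z) : X ⊔ Y = ⊤ := by
  refine Submodule.eq_top_of_forall_mem_add_smul_of_isNilpotent ⟨p, pi_pow_prime p⟩ fun n => ?_
  have hπn : π • (π ^ (p - 1) • n) = 0 := by
    rw [← mul_smul, ← pow_succ', Nat.sub_add_cancel (Fact.out : p.Prime).one_le, pi_pow_prime,
      zero_smul]
  obtain ⟨z, hzY, hz⟩ :=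
    Y.exists_mem_eq_pi_pow_pred_smul p (pi_pow_pred_smul_mem_of_maximal p hmax n) hπn
  obtain ⟨x, hx, hcx⟩ := hsurj (show c (n - z) ∈ LinearMap.ker r by
    rw [LinearMap.mem_ker, hrc, smul_sub, hz, sub_self])
  obtain ⟨w, hw⟩ := exists_pi_smul_eq_of_map_eq_zero hker (show c (n - z - x) = 0 by
    rw [map_sub, hcx, sub_self])
  exact ⟨x + z, add_mem (Submodule.mem_sup_left hx) (Submodule.mem_sup_right hzY), w,
    by rw [hw]; abel⟩

end Decomposition

theorem stmt17_general (p : ℕ) [Fact p.Prime]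
    (M A : Type*) [AddCommGroup M] [Module (Sp p) M]
    [Module (ZMod p) M] [IsScalarTower (ZMod p) (Sp p) M]
    [AddCommGroup A] [Module (ZMod p) A]
    (c : M →ₗ[ZMod p] A) (r : A →ₗ[ZMod p] M)
    (hrc : ∀ m : M, r (c m) = (sigma p - 1) ^ (p - 1) • m)
    (hker : LinearMap.ker c = LinearMap.range (smulMap p M (sigma p - 1)))
    (hfix : Submodule.map c (LinearMap.ker (smulMap p M (sigma p - 1))) = LinearMap.ker r)
    (hmeet : LinearMap.ker (smulMap p M (sigma p - 1)) ⊓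
        LinearMap.range (smulMap p M (sigma p - 1)) =
      LinearMap.range (smulMap p M ((sigma p - 1) ^ (p - 1))))
    (X Y : Submodule (Sp p) M)
    (hXtriv : ∀ m ∈ X, sigma p • m = m)
    (hYfree : Module.Free (Sp p) Y) :
    ⇑c '' X ⊆ LinearMap.ker r ∧
      ((Set.BijOn c X (LinearMap.ker r) ∧
          ∀ Z : Submodule (Sp p) M, Module.Free (Sp p) Z → Y ≤ Z → Y = Z) ↔
        IsCompl X Y) := by
  have hX : ∀ x ∈ X, (sigma p - 1) • x = 0 := fun x hx => by
    rw [sub_smul, one_smul, hXtriv x hx, sub_self]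
  refine ⟨(mapsTo_ker hrc hX).image_subset, ⟨fun ⟨hbij, hmax⟩ => ?_, fun hC => ?_⟩⟩
  · exact ⟨disjoint_of_injOn hker hX hbij.injOn,
      codisjoint_iff.mpr (sup_eq_top_of_surjOn_of_maximal hrc hker hbij.surjOn hmax)⟩
  · exact ⟨⟨mapsTo_ker hrc hX, injOn_of_isCompl hker hmeet hX hC,
      surjOn_of_sup_eq_top hker hfix hX hC.sup_eq_top⟩,
      fun Z _ hYZ => eq_of_le_of_free_of_isCompl p hX hC hYZ⟩

/-- Characterization of decompositions (abstract Theorem 3): in the setting of the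
abstract structure theorem, for `X` trivial and `Y` free, `c(X) ⊆ ker r`, and
`c : X ≅ ker r` with `Y` maximal free ⟺ `M = X ⊕ Y`. -/
theorem stmt17 (p : ℕ) [Fact p.Prime]
    (M A : Type*) [AddCommGroup M] [Module (Sp p) M]
    [Module (ZMod p) M] [IsScalarTower (ZMod p) (Sp p) M]
    [AddCommGroup A] [Module (ZMod p) A]
    (c : M →ₗ[ZMod p] A) (r : A →ₗ[ZMod p] M)
    (hrc : ∀ m : M, r (c m) = (sigma p - 1) ^ (p - 1) • m)
    (hsurj : Function.Surjective c)
    (hker : LinearMap.ker c = LinearMap.range (smulMap p M (sigma p - 1)))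
    (hcomm : ∀ m : M, c (sigma p • m) = c m)
    (hfix : Submodule.map c (LinearMap.ker (smulMap p M (sigma p - 1))) = LinearMap.ker r)
    (hmeet : LinearMap.ker (smulMap p M (sigma p - 1)) ⊓
        LinearMap.range (smulMap p M (sigma p - 1)) =
      LinearMap.range (smulMap p M ((sigma p - 1) ^ (p - 1))))
    (X Y : Submodule (Sp p) M)
    (hXtriv : ∀ m ∈ X, sigma p • m = m)
    (hYfree : Module.Free (Sp p) Y) :
    ⇑c '' X ⊆ LinearMap.ker r ∧
      ((Set.BijOn c X (LinearMap.ker r) ∧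
          ∀ Z : Submodule (Sp p) M, Module.Free (Sp p) Z → Y ≤ Z → Y = Z) ↔
        IsCompl X Y) :=
  stmt17_general p M A c r hrc hker hfix hmeet X Y hXtriv hYfree
end
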